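/- arXiv:1906.05068 — 4 statements merged into one kernel-verified Lean document; each statement's English description precedes it below -/
import Mathlib

section
/- Let K be a field and let x, y ∈ K∖{0,1} with x ≠ y. Then in Λ² K^×, one has (x ∧ (1-x)) - (y ∧ (1-y)) + ((y/x) ∧ (1 - y/x)) + (((1-x)/(1-y)) ∧ (1 - (1-x)/(1-y))) - (((1-x⁻¹)/(1-y⁻¹)) ∧ (1 - (1-x⁻¹)/(1-y⁻¹))) = 0, whenever all the arguments y/x, (1-x)/(1-y), (1-x⁻¹)/(1-y⁻¹) lie in K∖{0,1}. -/
/-!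
With `d := x - y`, each of the ten arguments is a Laurent monomial in `x, y, 1 - x, 1 - y, d`:
`y/x`, `1 - y/x = d/x`, `(1-x)/(1-y)`, `1 - (1-x)/(1-y) = d/(1-y)`,
`(1-x⁻¹)/(1-y⁻¹) = y(1-x)/(x(1-y))` and `1 - (1-x⁻¹)/(1-y⁻¹) = d/(x(1-y))`.
Expanding the five wedges by bilinearity, every term cancels against another one up to
antisymmetry, so the relation holds for arbitrary units `x, y, 1-x, 1-y, d`.
-/

/-- The wedge `f ∧ g` of two units of a field `K`, as an element of the exterior algebra
(over `ℤ`) of the multiplicative group `K^×` written additively; its degree-two component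
is the exterior square `Λ² K^×`. -/
noncomputable def wedge {K : Type*} [Field K] (f g : Kˣ) :
    ExteriorAlgebra ℤ (Additive Kˣ) :=
  ExteriorAlgebra.ι ℤ (Additive.ofMul f) * ExteriorAlgebra.ι ℤ (Additive.ofMul g)

section

variable {K : Type*} [Field K]

lemma wedge_mul_left (f g h : Kˣ) : wedge (f * g) h = wedge f h + wedge g h := by
  rw [wedge, wedge, wedge, ofMul_mul, map_add, add_mul]

lemma wedge_mul_right (f g h : Kˣ) : wedge f (g * h) = wedge f g + wedge f h := by
  rw [wedge, wedge, wedge, ofMul_mul, map_add, mul_add]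

lemma wedge_inv_left (f g : Kˣ) : wedge f⁻¹ g = -wedge f g := by
  rw [wedge, wedge, ofMul_inv, map_neg, neg_mul]

lemma wedge_inv_right (f g : Kˣ) : wedge f g⁻¹ = -wedge f g := by
  rw [wedge, wedge, ofMul_inv, map_neg, mul_neg]

lemma wedge_self (f : Kˣ) : wedge f f = 0 :=
  ExteriorAlgebra.ι_sq_zero _

lemma wedge_antisymm (f g : Kˣ) : wedge f g = -wedge g f :=
  eq_neg_of_add_eq_zero_left (ExteriorAlgebra.ι_add_mul_swap _ _)

lemma wedge_five_term_monomials (x y x' y' d : Kˣ) :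
    wedge x x' - wedge y y' + wedge (y * x⁻¹) (d * x⁻¹) + wedge (x' * y'⁻¹) (d * y'⁻¹)
      - wedge (x' * y * x⁻¹ * y'⁻¹) (d * x⁻¹ * y'⁻¹) = 0 := by
  simp only [wedge_mul_left, wedge_mul_right, wedge_inv_left, wedge_inv_right,
    wedge_self]
  rw [wedge_antisymm x' x, wedge_antisymm y x, wedge_antisymm y' x]
  abel

end

theorem five_term_wedge_general {K : Type*} [Field K] (x y a b c : Kˣ)
    (hxy : (x : K) ≠ y)
    (ha : (a : K) = y / x)
    (hb : (b : K) = (1 - (x : K)) / (1 - (y : K)))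
    (hc : (c : K) = (1 - (x : K)⁻¹) / (1 - (y : K)⁻¹))
    (x' y' a' b' c' : Kˣ)
    (hx' : (x' : K) = 1 - x) (hy' : (y' : K) = 1 - y) (ha' : (a' : K) = 1 - a)
    (hb' : (b' : K) = 1 - b) (hc' : (c' : K) = 1 - c) :
    wedge x x' - wedge y y' + wedge a a' + wedge b b' - wedge c c' = 0 := by
  have hy'0 : (1 : K) - y ≠ 0 := hy' ▸ y'.ne_zero
  have hy1 : (y : K) ≠ 1 := (sub_ne_zero.mp hy'0).symm
  let d := Units.mk0 ((x : K) - y) (sub_ne_zero.mpr hxy)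
  have ea : a = y * x⁻¹ := Units.ext <| by push_cast [ha]; field_simp
  have ea' : a' = d * x⁻¹ := Units.ext <| by push_cast [d, Units.val_mk0, ha', ha]; field_simp
  have eb : b = x' * y'⁻¹ := Units.ext <| by push_cast [hb, hx', hy']; field_simp
  have eb' : b' = d * y'⁻¹ := Units.ext <| by
    push_cast [d, Units.val_mk0, hb', hb, hy']; field_simp; ring
  have ec : c = x' * y * x⁻¹ * y'⁻¹ := Units.ext <| by
    push_cast [hc, hx', hy']; field_simp; ring
  have ec' : c' = d * x⁻¹ * y'⁻¹ := Units.ext <| by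
    push_cast [d, Units.val_mk0, hc', hc, hy']; field_simp; ring
  rw [ea, ea', eb, eb', ec, ec']
  exact wedge_five_term_monomials x y x' y' d

/-- the five-term relation holds in `Λ² K^×` for the map `f ↦ f ∧ (1-f)`:
for `x ≠ y` in `K∖{0,1}` with `y/x`, `(1-x)/(1-y)` and `(1-x⁻¹)/(1-y⁻¹)` in `K∖{0,1}`,
`(x ∧ (1-x)) - (y ∧ (1-y)) + ((y/x) ∧ (1-y/x)) + (((1-x)/(1-y)) ∧ (1-(1-x)/(1-y)))
  - (((1-x⁻¹)/(1-y⁻¹)) ∧ (1-(1-x⁻¹)/(1-y⁻¹))) = 0`. -/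
theorem five_term_wedge {K : Type*} [Field K] (x y a b c : Kˣ)
    (hx1 : (x : K) ≠ 1) (hy1 : (y : K) ≠ 1) (hxy : (x : K) ≠ y)
    (ha : (a : K) = y / x) (ha1 : (a : K) ≠ 1)
    (hb : (b : K) = (1 - (x : K)) / (1 - (y : K))) (hb1 : (b : K) ≠ 1)
    (hc : (c : K) = (1 - (x : K)⁻¹) / (1 - (y : K)⁻¹)) (hc1 : (c : K) ≠ 1)
    (x' y' a' b' c' : Kˣ)
    (hx' : (x' : K) = 1 - x) (hy' : (y' : K) = 1 - y) (ha' : (a' : K) = 1 - a)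
    (hb' : (b' : K) = 1 - b) (hc' : (c' : K) = 1 - c) :
    wedge x x' - wedge y y' + wedge a a' + wedge b b' - wedge c c' = 0 :=
  five_term_wedge_general x y a b c hxy ha hb hc x' y' a' b' c' hx' hy' ha' hb' hc'
end

section
/- Let E = ℂ/Λ be a complex elliptic curve and ℘ its Weierstrass function. For distinct points α, β ∈ E, the divisor of the function z ↦ ℘(z-α) - ℘(z-β) equals ∑_{x : 2x = α+β} [x] - 2[α] - 2[β]; in particular this function has degree 4 and its zero set is a coset of the 2-torsion subgroup E[2]. -/
open Filter Topology

/-- The lattice `⟨1, τ⟩ ⊆ ℂ`. -/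
noncomputable def lat (τ : ℂ) : AddSubgroup ℂ := AddSubgroup.closure {1, τ}

/-- `IsWeierstrassP τ ℘` says that `℘` is the Weierstrass `℘`-function of the lattice
`⟨1,τ⟩` (with junk values at lattice points): it is `⟨1,τ⟩`-periodic, even, analytic off
the lattice, and satisfies `℘(z) = z⁻² + o(z)` near `0`.  These conditions determine `℘`
uniquely off the lattice. -/
structure IsWeierstrassP (τ : ℂ) (℘ : ℂ → ℂ) : Prop where
  periodic : ∀ w ∈ lat τ, ∀ z, ℘ (z + w) = ℘ z
  even : ∀ z, ℘ (-z) = ℘ z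
  analytic : AnalyticOnNhd ℂ ℘ {z | z ∉ lat τ}
  pole : Tendsto (fun z : ℂ => (℘ z - (z ^ 2)⁻¹) / z) (𝓝[≠] 0) (𝓝 0)

/-!
Off the lattice `Λ`, `℘` is determined by periodicity and its principal part at `0`: the
difference with Mathlib's `PeriodPair.weierstrassP` is a bounded entire function vanishing at `0`
(Liouville). Hence `℘'² = 4℘³ - g₂℘ - g₃` and, differentiating, `℘'' = 6℘² - g₂/2`.
If `℘ u = ℘ v` and `℘' u = ℘' v`, the translates `℘ (· + u)` and `℘ (· + v)` solve the same
second-order ODE with the same initial data, so they agree and `u - v` is a period of `℘`, which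
must lie in `Λ` because of the pole at `0`. Since `℘'²` is a function of `℘`, `℘ u = ℘ v` forces
`u ≡ ±v`, and `℘' u = 0` forces `2u ≡ 0`. So the zeros of `℘(z - α) - ℘(z - β)` are the `z` with
`2z ≡ α + β`; they are simple because `℘'(z - β) = -℘'(z - α)` there; and they form a coset of
`E[2]`, whose four elements are the half-periods `(a + bτ)/2`, `a, b ∈ {0, 1}`.
-/

open scoped PeriodPair

lemma setOf_add_self_eq_image_add {G : Type*} [AddCommGroup G] (x₀ : G) :
    {x : G | x + x = x₀ + x₀} = (x₀ + ·) '' {t | t + t = 0} := by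
  ext x
  rw [Set.image_add_left, Set.mem_preimage, Set.mem_ofPred_eq, Set.mem_ofPred_eq,
    show -x₀ + x + (-x₀ + x) = x + x - (x₀ + x₀) by abel, sub_eq_zero]

lemma AnalyticAt.eventuallyEq_of_deriv_deriv_eq {F : ℂ → ℂ} (hF : Differentiable ℂ F)
    {f g : ℂ → ℂ} {z₀ : ℂ} (hf : AnalyticAt ℂ f z₀) (hg : AnalyticAt ℂ g z₀)
    (hf' : ∀ᶠ z in 𝓝 z₀, deriv (deriv f) z = F (f z))
    (hg' : ∀ᶠ z in 𝓝 z₀, deriv (deriv g) z = F (g z))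
    (h₀ : f z₀ = g z₀) (h₁ : deriv f z₀ = deriv g z₀) : f =ᶠ[𝓝 z₀] g := by
  -- on the real line through `z₀`, `(f, f')` solves `x' = V x`: ODE uniqueness, then identity thm
  let V : ℂ × ℂ → ℂ × ℂ := fun p => (p.2, F p.1)
  let lift : (ℂ → ℂ) → ℝ → ℂ × ℂ := fun h t => (h (z₀ + t), deriv h (z₀ + t))
  have hline : Tendsto (fun t : ℝ => z₀ + t) (𝓝 0) (𝓝 z₀) := by
    simpa using (by fun_prop : Continuous fun t : ℝ => z₀ + t).tendsto 0
  have solves : ∀ h : ℂ → ℂ, AnalyticAt ℂ h z₀ →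
      (∀ᶠ z in 𝓝 z₀, deriv (deriv h) z = F (h z)) →
      ∀ᶠ t in 𝓝 (0 : ℝ), HasDerivAt (lift h) (V (lift h t)) t := by
    intro h hh hh'
    filter_upwards [hline.eventually (hh.eventually_analyticAt.and hh')] with t ⟨ht, ht'⟩
    have h1 := (ht.differentiableAt.hasDerivAt.comp_const_add z₀ (t : ℂ)).comp_ofReal
    have h2 := (ht.deriv.differentiableAt.hasDerivAt.comp_const_add z₀ (t : ℂ)).comp_ofReal
    rw [ht'] at h2
    exact h1.prodMk h2
  have hV : ContDiff ℝ 1 V :=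
    contDiff_snd.prodMk ((hF.contDiff (n := 1)).restrict_scalars ℝ |>.comp contDiff_fst)
  obtain ⟨K, s, hs, hK⟩ := (hV.contDiffAt (x := (f z₀, deriv f z₀))).exists_lipschitzOnWith
  have mem_s : ∀ h : ℂ → ℂ, AnalyticAt ℂ h z₀ → (h z₀, deriv h z₀) = (f z₀, deriv f z₀) →
      ∀ᶠ t in 𝓝 (0 : ℝ), lift h t ∈ s := by
    intro h hh h0
    rw [← h0] at hs
    exact ((hh.continuousAt.tendsto.comp hline).prodMk_nhds
      (hh.deriv.continuousAt.tendsto.comp hline)).eventually_mem hs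
  have hlift : lift f =ᶠ[𝓝 0] lift g :=
    ODE_solution_unique_of_eventually (v := fun _ => V) (s := fun _ => s)
      (Eventually.of_forall fun _ => hK) ((solves f hf hf').and (mem_s f hf rfl))
      ((solves g hg hg').and (mem_s g hg (by rw [h₀, h₁]))) (by simp [lift, h₀, h₁])
  refine (hf.frequently_eq_iff_eventually_eq hg).mp ?_
  have hpunct : Tendsto (fun t : ℝ => z₀ + t) (𝓝[≠] 0) (𝓝[≠] z₀) :=
    tendsto_nhdsWithin_of_tendsto_nhds_of_eventually_within _ (hline.mono_left nhdsWithin_le_nhds)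
      (eventually_nhdsWithin_of_forall fun t ht => by simpa using ht)
  exact hpunct.frequently
    ((hlift.filter_mono nhdsWithin_le_nhds).mono fun t ht => congrArg Prod.fst ht).frequently

namespace PeriodPair

variable (L : PeriodPair)

noncomputable def halfPeriod (p : ZMod 2 × ZMod 2) : ℂ ⧸ L.lattice.toAddSubgroup :=
  QuotientAddGroup.mk (((p.1.val / 2 : ℚ) : ℂ) * L.ω₁ + ((p.2.val / 2 : ℚ) : ℂ) * L.ω₂)

lemma halfPeriod_injective : Function.Injective L.halfPeriod := by
  have eq_of_den : ∀ a a' : ZMod 2, (((a.val : ℚ) - a'.val) / 2).den = 1 → a = a' := by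
    decide +kernel
  rintro ⟨a, b⟩ ⟨a', b'⟩ h
  rw [halfPeriod, halfPeriod, QuotientAddGroup.eq_iff_sub_mem, Submodule.mem_toAddSubgroup] at h
  have hmem : (((a.val : ℚ) - a'.val) / 2 : ℚ) * L.ω₁ + (((b.val : ℚ) - b'.val) / 2 : ℚ) * L.ω₂
      ∈ L.lattice := by
    convert h using 1; push_cast; ring
  obtain ⟨ha, hb⟩ := mul_ω₁_add_mul_ω₂_mem_lattice.mp hmem
  rw [eq_of_den _ _ ha, eq_of_den _ _ hb]

lemma range_halfPeriod :
    Set.range L.halfPeriod = {t : ℂ ⧸ L.lattice.toAddSubgroup | t + t = 0} := by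
  ext t
  constructor
  · rintro ⟨⟨a, b⟩, rfl⟩
    rw [Set.mem_ofPred_eq, halfPeriod, ← QuotientAddGroup.mk_add, QuotientAddGroup.eq_zero_iff,
      Submodule.mem_toAddSubgroup, mem_lattice]
    exact ⟨a.val, b.val, by push_cast; ring⟩
  · intro ht
    obtain ⟨z, rfl⟩ := QuotientAddGroup.mk_surjective t
    rw [Set.mem_ofPred_eq, ← QuotientAddGroup.mk_add, QuotientAddGroup.eq_zero_iff,
      Submodule.mem_toAddSubgroup, mem_lattice] at ht
    obtain ⟨m, n, hmn⟩ := ht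
    refine ⟨(m, n), (QuotientAddGroup.eq_iff_sub_mem.mpr ?_).symm⟩
    rw [Submodule.mem_toAddSubgroup, mem_lattice]
    refine ⟨m / 2, n / 2, ?_⟩
    have hm : (((m : ZMod 2).val : ℤ) : ℂ) + 2 * ((m / 2 : ℤ) : ℂ) = m := by
      exact_mod_cast (ZMod.val_intCast (n := 2) m ▸ Int.emod_add_mul_ediv m 2)
    have hn : (((n : ZMod 2).val : ℤ) : ℂ) + 2 * ((n / 2 : ℤ) : ℂ) = n := by
      exact_mod_cast (ZMod.val_intCast (n := 2) n ▸ Int.emod_add_mul_ediv n 2)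
    push_cast at hm hn ⊢
    linear_combination (hmn + L.ω₁ * hm + L.ω₂ * hn) / 2

lemma ncard_two_torsion : {t : ℂ ⧸ L.lattice.toAddSubgroup | t + t = 0}.ncard = 4 := by
  rw [← range_halfPeriod, Set.ncard_range_of_injective L.halfPeriod_injective]
  simp

lemma countable_lattice : (L.lattice : Set ℂ).Countable :=
  Set.countable_coe_iff.mp L.latticeEquivProd.toEquiv.injective.countable

lemma eventually_notMem_lattice : ∀ᶠ z in 𝓝[≠] (0 : ℂ), z ∉ L.lattice := by
  filter_upwards [nhdsWithin_le_nhds (L.compl_lattice_sdiff_singleton_mem_nhds 0),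
    self_mem_nhdsWithin] with z hz hz0
  simp_all

lemma not_tendsto_weierstrassP (c : ℂ) : ¬ Tendsto ℘[L] (𝓝[≠] 0) (𝓝 c) := fun h => by
  have := (tendsto_nhds_iff_meromorphicOrderAt_nonneg (L.meromorphic_weierstrassP 0)).mp ⟨c, h⟩
  rw [L.order_weierstrassP 0 (zero_mem _)] at this
  exact absurd this (by decide)

lemma tendsto_weierstrassP_sub_inv_sq :
    Tendsto (fun z => ℘[L] z - (z ^ 2)⁻¹) (𝓝[≠] 0) (𝓝 0) := by
  have h0 : L.weierstrassPExcept 0 0 = 0 := by simp [weierstrassPExcept]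
  have := (L.analyticAt_weierstrassPExcept 0).continuousAt.tendsto.mono_left
    (nhdsWithin_le_nhds (s := {0}ᶜ))
  rw [h0] at this
  refine this.congr fun z => ?_
  rw [← L.weierstrassPExcept_add ⟨0, zero_mem _⟩ z]
  simp

lemma eqOn_zero_of_periodic {f : ℂ → ℂ} (hf : DifferentiableOn ℂ f (L.lattice : Set ℂ)ᶜ)
    (hper : ∀ z, ∀ w ∈ L.lattice, f (z + w) = f z) (h0 : Tendsto f (𝓝[≠] 0) (𝓝 0)) :
    Set.EqOn f 0 (L.lattice : Set ℂ)ᶜ := by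
  classical
  -- Liouville, applied to the extension of `f` by `0` across the lattice
  set R := (L.lattice : Set ℂ)ᶜ.indicator f
  have hRper : ∀ z w, w ∈ L.lattice → R (z + w) = R z := by
    intro z w hw
    by_cases hz : z ∈ L.lattice
    · simp [R, hz, add_mem hz hw]
    · have hzw : z + w ∉ L.lattice := fun h => hz (by simpa using sub_mem h hw)
      simp [R, hz, hzw, hper z w hw]
  have hRoff : ∀ z ∉ L.lattice, DifferentiableAt ℂ R z := fun z hz => by
    have hopen := L.isClosed_lattice.isOpen_compl.mem_nhds hz
    refine (hf.differentiableAt hopen).congr_of_eventuallyEq ?_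
    filter_upwards [hopen] with w hw
    simp [R, Set.indicator_of_mem hw]
  have hR0 : DifferentiableAt ℂ R 0 := by
    refine (Complex.analyticAt_of_differentiable_on_punctured_nhds_of_continuousAt
      (L.eventually_notMem_lattice.mono hRoff) ?_).differentiableAt
    rw [← continuousWithinAt_compl_self, ContinuousWithinAt]
    simpa [R] using h0.congr' (L.eventually_notMem_lattice.mono fun z hz => by simp [hz])
  have hR : Differentiable ℂ R := fun z => by
    by_cases hz : z ∈ L.lattice
    · have hshift : (fun x => R (x - z)) = R := funext fun x => by
        simpa using (hRper (x - z) z hz).symm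
      rw [← hshift]
      exact differentiableAt_comp_sub_const.mpr (by simpa using hR0)
    · exact hRoff z hz
  have hbdd := (IsZLattice.isCompact_range_of_periodic L.lattice R hR.continuous hRper).isBounded
  intro z hz
  simpa [R, hz] using hR.apply_eq_apply_of_bounded hbdd z 0

variable {L}

lemma mem_lattice_of_eventuallyEq_weierstrassP_comp_add {t z₀ : ℂ} (hz₀ : z₀ ∉ L.lattice)
    (hz₀t : z₀ + t ∉ L.lattice) (h : (fun z => ℘[L] (z + t)) =ᶠ[𝓝 z₀] ℘[L]) :
    t ∈ L.lattice := by
  by_contra ht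
  let U : Set ℂ := (L.lattice : Set ℂ)ᶜ ∩ (· + t) ⁻¹' (L.lattice : Set ℂ)ᶜ
  have hU : IsPreconnected U := by
    rw [show U = ((L.lattice : Set ℂ) ∪ (· + t) ⁻¹' L.lattice)ᶜ by simp [U, Set.compl_union]]
    exact ((L.countable_lattice.union (L.countable_lattice.preimage (add_left_injective t))
      ).isConnected_compl_of_one_lt_rank (by simp)).isPreconnected
  have hshift : AnalyticOnNhd ℂ (fun z => ℘[L] (z + t)) U := fun z hz =>
    (L.analyticOnNhd_weierstrassP _ hz.2).comp (f := (· + t)) (by fun_prop)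
  have hEq := hshift.eqOn_of_preconnected_of_eventuallyEq
    (L.analyticOnNhd_weierstrassP.mono Set.inter_subset_left) hU ⟨hz₀, hz₀t⟩ h
  -- so `℘ = ℘ (· + t)` on a punctured neighbourhood of `0`, contradicting the pole there
  have hnear : ∀ᶠ z in 𝓝[≠] (0 : ℂ), z ∈ U := by
    have hcont : Tendsto (· + t) (𝓝 (0 : ℂ)) (𝓝 t) := by
      simpa using (continuous_add_const t).tendsto 0
    exact L.eventually_notMem_lattice.and (nhdsWithin_le_nhds
      (hcont.eventually (L.isClosed_lattice.isOpen_compl.mem_nhds ht)))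
  have hlim : Tendsto (fun z => ℘[L] (z + t)) (𝓝[≠] 0) (𝓝 (℘[L] t)) := by
    have : AnalyticAt ℂ (fun z => ℘[L] (z + t)) 0 :=
      (L.analyticOnNhd_weierstrassP t ht).comp_of_eq (by fun_prop) (zero_add t)
    simpa using this.continuousAt.tendsto.mono_left nhdsWithin_le_nhds
  exact L.not_tendsto_weierstrassP _ (hlim.congr' (hnear.mono fun z hz => hEq hz))

lemma hasDerivAt_weierstrassP {z : ℂ} (hz : z ∉ L.lattice) : HasDerivAt ℘[L] (℘'[L] z) z := by
  simpa using (L.analyticOnNhd_weierstrassP z hz).differentiableAt.hasDerivAt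

lemma derivWeierstrassP_mul_eq_zero {z : ℂ} (hz : z ∉ L.lattice) :
    ℘'[L] z * (2 * deriv ℘'[L] z - 12 * ℘[L] z ^ 2 + L.g₂) = 0 := by
  have hP := L.hasDerivAt_weierstrassP hz
  have hP' : HasDerivAt ℘'[L] (deriv ℘'[L] z) z :=
    (L.analyticOnNhd_derivWeierstrassP z hz).differentiableAt.hasDerivAt
  have hrel := ((hP'.pow 2).sub ((((hP.pow 3).const_mul 4).sub (hP.const_mul L.g₂)).sub_const L.g₃))
  have hzero : (fun w => ℘'[L] w ^ 2 - (4 * ℘[L] w ^ 3 - L.g₂ * ℘[L] w - L.g₃)) =ᶠ[𝓝 z] 0 := by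
    filter_upwards [L.isClosed_lattice.isOpen_compl.mem_nhds hz] with w hw
    simp [L.derivWeierstrassP_sq w hw]
  have := hrel.unique ((hasDerivAt_const z (0 : ℂ)).congr_of_eventuallyEq hzero)
  linear_combination this

lemma frequently_derivWeierstrassP_ne_zero {z : ℂ} (hz : z ∉ L.lattice) :
    ∃ᶠ w in 𝓝 z, ℘'[L] w ≠ 0 := fun h => by
  have hpre := (L.countable_lattice.isConnected_compl_of_one_lt_rank (by simp)).isPreconnected
  have hzero := L.analyticOnNhd_derivWeierstrassP.eqOn_zero_of_preconnected_of_eventuallyEq_zero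
    hpre hz (h.mono fun w hw => by simpa using hw)
  have hconst : ∀ w ∉ L.lattice, ℘[L] w = ℘[L] z := fun w hw =>
    L.isClosed_lattice.isOpen_compl.is_const_of_deriv_eq_zero hpre L.differentiableOn_weierstrassP
      (by simpa using hzero) hw hz
  exact L.not_tendsto_weierstrassP _
    (tendsto_const_nhds.congr' (L.eventually_notMem_lattice.mono fun w hw => (hconst w hw).symm))

lemma deriv_derivWeierstrassP {z : ℂ} (hz : z ∉ L.lattice) :
    deriv ℘'[L] z = 6 * ℘[L] z ^ 2 - L.g₂ / 2 := by
  suffices 2 * deriv ℘'[L] z - 12 * ℘[L] z ^ 2 + L.g₂ = 0 by linear_combination this / 2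
  by_contra hne
  have hcont : ContinuousAt (fun w => 2 * deriv ℘'[L] w - 12 * ℘[L] w ^ 2 + L.g₂) z := by
    have := (L.analyticOnNhd_derivWeierstrassP z hz).deriv.continuousAt
    have := (L.analyticOnNhd_weierstrassP z hz).continuousAt
    fun_prop
  obtain ⟨w, hw, hψ, hΛ⟩ := ((L.frequently_derivWeierstrassP_ne_zero hz).and_eventually
    ((hcont.eventually_ne hne).and (L.isClosed_lattice.isOpen_compl.mem_nhds hz))).exists
  exact mul_ne_zero hw hψ (L.derivWeierstrassP_mul_eq_zero hΛ)

lemma sub_mem_lattice_of_weierstrassP_eq {u v : ℂ} (hu : u ∉ L.lattice) (hv : v ∉ L.lattice)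
    (h : ℘[L] u = ℘[L] v) (h' : ℘'[L] u = ℘'[L] v) : u - v ∈ L.lattice := by
  have hshift : ∀ z, deriv (fun w => ℘[L] (w + (u - v))) z = ℘'[L] (z + (u - v)) := fun z => by
    rw [deriv_comp_add_const, deriv_weierstrassP]
  have hu' : v + (u - v) ∉ L.lattice := by simpa using hu
  refine mem_lattice_of_eventuallyEq_weierstrassP_comp_add hv hu' ?_
  refine AnalyticAt.eventuallyEq_of_deriv_deriv_eq (F := fun y => 6 * y ^ 2 - L.g₂ / 2)
    (by fun_prop) ((L.analyticOnNhd_weierstrassP _ hu').comp_of_eq (by fun_prop) rfl)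
    (L.analyticOnNhd_weierstrassP v hv) ?_ ?_ (by simpa using h) (by simpa [hshift] using h')
  · filter_upwards [(continuous_add_const (u - v)).continuousAt.eventually_mem
      (L.isClosed_lattice.isOpen_compl.mem_nhds hu')] with z hz
    rw [funext hshift, deriv_comp_add_const, deriv_derivWeierstrassP hz]
  · filter_upwards [L.isClosed_lattice.isOpen_compl.mem_nhds hv] with z hz
    rw [deriv_weierstrassP, deriv_derivWeierstrassP hz]

lemma weierstrassP_eq_iff {u v : ℂ} (hu : u ∉ L.lattice) (hv : v ∉ L.lattice) :
    ℘[L] u = ℘[L] v ↔ u - v ∈ L.lattice ∨ u + v ∈ L.lattice := by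
  constructor
  · intro h
    have hv' : -v ∉ L.lattice := by simpa using hv
    have hsq : ℘'[L] u ^ 2 = ℘'[L] v ^ 2 := by
      rw [L.derivWeierstrassP_sq u hu, L.derivWeierstrassP_sq v hv, h]
    rcases sq_eq_sq_iff_eq_or_eq_neg.mp hsq with h' | h'
    · exact Or.inl (sub_mem_lattice_of_weierstrassP_eq hu hv h h')
    · have := sub_mem_lattice_of_weierstrassP_eq hu hv' (by rwa [weierstrassP_neg])
        (by rwa [derivWeierstrassP_neg])
      exact Or.inr (by simpa using this)
  · rintro (h | h)
    · simpa using L.weierstrassP_add_coe v ⟨_, h⟩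
    · simpa using L.weierstrassP_add_coe (-v) ⟨_, h⟩

lemma add_self_mem_lattice_of_derivWeierstrassP_eq_zero {u : ℂ} (hu : u ∉ L.lattice)
    (h : ℘'[L] u = 0) : u + u ∈ L.lattice := by
  simpa using sub_mem_lattice_of_weierstrassP_eq hu (by simpa using hu) (L.weierstrassP_neg u).symm
    (by rw [derivWeierstrassP_neg, h, neg_zero])

lemma weierstrassP_sub_sub_eq_zero_iff {α β z : ℂ} (hβα : β - α ∉ L.lattice)
    (hzα : z - α ∉ L.lattice) (hzβ : z - β ∉ L.lattice) :
    ℘[L] (z - α) - ℘[L] (z - β) = 0 ↔ z + z - (α + β) ∈ L.lattice := by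
  rw [sub_eq_zero, L.weierstrassP_eq_iff hzα hzβ, show z - α - (z - β) = β - α by ring,
    show z - α + (z - β) = z + z - (α + β) by ring]
  simp [hβα]

lemma deriv_weierstrassP_sub_sub_ne_zero {α β z : ℂ} (hαβ : α - β ∉ L.lattice)
    (hzα : z - α ∉ L.lattice) (hzβ : z - β ∉ L.lattice) (hz : z + z - (α + β) ∈ L.lattice) :
    deriv (fun w => ℘[L] (w - α) - ℘[L] (w - β)) z ≠ 0 := by
  have hd := ((L.hasDerivAt_weierstrassP hzα).comp_sub_const z α).fun_sub
    ((L.hasDerivAt_weierstrassP hzβ).comp_sub_const z β)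
  -- `z - β ≡ -(z - α)` and `℘'` is odd, so the derivative is `2 ℘'(z - α)`
  rw [hd.deriv, show z - β = -(z - α) + (z + z - (α + β)) by ring,
    L.derivWeierstrassP_add_coe _ ⟨_, hz⟩, derivWeierstrassP_neg, sub_neg_eq_add, ← two_mul]
  refine mul_ne_zero two_ne_zero fun h => hαβ ?_
  convert sub_mem hz (L.add_self_mem_lattice_of_derivWeierstrassP_eq_zero hzα h) using 1
  ring

end PeriodPair

def periodPair (τ : ℂ) (hτ : 0 < τ.im) : PeriodPair where
  ω₁ := 1
  ω₂ := τ
  indep := LinearIndependent.pair_iff.mpr fun s t h => by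
    have ht : t = 0 := by simpa [hτ.ne'] using congrArg Complex.im h
    subst ht
    simpa using h

lemma lat_eq_lattice {τ : ℂ} (hτ : 0 < τ.im) : lat τ = (periodPair τ hτ).lattice.toAddSubgroup :=
  (Submodule.span_int_eq_addSubgroupClosure _).symm

lemma mem_lat_iff {τ : ℂ} (hτ : 0 < τ.im) {z : ℂ} : z ∈ lat τ ↔ z ∈ (periodPair τ hτ).lattice := by
  rw [lat_eq_lattice hτ]
  rfl

lemma ncard_setOf_add_self_eq {τ : ℂ} (hτ : 0 < τ.im) (x₀ : ℂ ⧸ lat τ) :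
    {x : ℂ ⧸ lat τ | x + x = x₀ + x₀}.ncard = 4 := by
  rw [setOf_add_self_eq_image_add, Set.ncard_image_of_injective _ (add_right_injective _),
    lat_eq_lattice hτ]
  exact (periodPair τ hτ).ncard_two_torsion

namespace IsWeierstrassP

variable {τ : ℂ} {℘ : ℂ → ℂ}

lemma tendsto_sub_inv_sq (h℘ : IsWeierstrassP τ ℘) :
    Tendsto (fun z => ℘ z - (z ^ 2)⁻¹) (𝓝[≠] 0) (𝓝 0) := by
  have := h℘.pole.mul (tendsto_id.mono_left nhdsWithin_le_nhds : Tendsto id (𝓝[≠] (0 : ℂ)) (𝓝 0))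
  rw [zero_mul] at this
  refine this.congr' ?_
  filter_upwards [self_mem_nhdsWithin] with z hz
  exact div_mul_cancel₀ _ hz

lemma eqOn_weierstrassP (hτ : 0 < τ.im) (h℘ : IsWeierstrassP τ ℘) :
    Set.EqOn ℘ ℘[periodPair τ hτ] (lat τ : Set ℂ)ᶜ := by
  set L := periodPair τ hτ
  have hzero := L.eqOn_zero_of_periodic (f := fun z => ℘ z - ℘[L] z) ?_ ?_ ?_
  · exact fun z hz => sub_eq_zero.mp (hzero ((mem_lat_iff hτ).not.mp hz))
  · exact fun z hz => ((h℘.analytic z ((mem_lat_iff hτ).not.mpr hz)).differentiableAt.sub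
      (L.analyticOnNhd_weierstrassP z hz).differentiableAt).differentiableWithinAt
  · intro z w hw
    rw [h℘.periodic w ((mem_lat_iff hτ).mpr hw), L.weierstrassP_add_coe z ⟨w, hw⟩]
  · simpa using h℘.tendsto_sub_inv_sq.sub L.tendsto_weierstrassP_sub_inv_sq

lemma eventuallyEq_weierstrassP (hτ : 0 < τ.im) (h℘ : IsWeierstrassP τ ℘) {z : ℂ}
    (hz : z ∉ lat τ) : ℘ =ᶠ[𝓝 z] ℘[periodPair τ hτ] := by
  have hopen : IsOpen (lat τ : Set ℂ)ᶜ := by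
    rw [lat_eq_lattice hτ]
    exact (periodPair τ hτ).isClosed_lattice.isOpen_compl
  filter_upwards [hopen.mem_nhds hz] with w hw using h℘.eqOn_weierstrassP hτ hw

lemma tendsto_sq_mul_sub (h℘ : IsWeierstrassP τ ℘) (a : ℂ) {b : ℂ} (hab : a - b ∉ lat τ) :
    Tendsto (fun z => (z - a) ^ 2 * (℘ (z - a) - ℘ (z - b))) (𝓝[≠] a) (𝓝 1) := by
  have hshift : Tendsto (· - a) (𝓝[≠] a) (𝓝[≠] 0) :=
    tendsto_nhdsWithin_of_tendsto_nhds_of_eventually_within _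
      (((continuous_sub_right a).tendsto' a 0 (sub_self a)).mono_left nhdsWithin_le_nhds)
      (eventually_nhdsWithin_of_forall fun z hz => sub_ne_zero.mpr hz)
  have hsq : Tendsto (fun w : ℂ => w ^ 2) (𝓝[≠] 0) (𝓝 0) := by
    simpa using ((continuous_pow 2).tendsto (0 : ℂ)).mono_left nhdsWithin_le_nhds
  have hcont : Tendsto (fun w => ℘ (w + (a - b))) (𝓝[≠] 0) (𝓝 (℘ (a - b))) := by
    have := (h℘.analytic _ hab).continuousAt.tendsto.comp
      (((continuous_add_const (a - b)).tendsto' 0 (a - b) (zero_add _)))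
    exact this.mono_left nhdsWithin_le_nhds
  have hlim : Tendsto (fun w => 1 + w ^ 2 * (℘ w - (w ^ 2)⁻¹) - w ^ 2 * ℘ (w + (a - b)))
      (𝓝[≠] 0) (𝓝 1) := by
    simpa using (tendsto_const_nhds.add (hsq.mul h℘.tendsto_sub_inv_sq)).sub (hsq.mul hcont)
  refine (hlim.comp hshift).congr' ?_
  filter_upwards [self_mem_nhdsWithin] with z hz
  have : z - a ≠ 0 := sub_ne_zero.mpr hz
  simp only [Function.comp_apply, sub_add_sub_cancel]
  field_simp
  ring

end IsWeierstrassP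

/-- for distinct points `α, β` of `E = ℂ/⟨1,τ⟩`, the elliptic function
`g(z) = ℘(z-α) - ℘(z-β)` has divisor `∑_{2x = α+β}[x] - 2[α] - 2[β]`: its zeros are
exactly the points `x` with `2x = α + β` on `E` and they are simple, it has double poles
at `α` and `β` (with leading coefficient `1`), it has degree `4`, and its zero set is a
coset of the `2`-torsion subgroup `E[2]`. -/
theorem weierstrass_difference_divisor (τ : ℂ) (hτ : 0 < τ.im)
    (℘ : ℂ → ℂ) (h℘ : IsWeierstrassP τ ℘) (α β : ℂ)
    (hαβ : (QuotientAddGroup.mk α : ℂ ⧸ lat τ) ≠ QuotientAddGroup.mk β) :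
    -- the zeros are exactly the solutions of `2x = α + β` on `E` …
    (∀ z : ℂ, z - α ∉ lat τ → z - β ∉ lat τ →
      (℘ (z - α) - ℘ (z - β) = 0 ↔
        (QuotientAddGroup.mk (z + z) : ℂ ⧸ lat τ) = QuotientAddGroup.mk (α + β))) ∧
    -- … and they are simple:
    (∀ z : ℂ, z - α ∉ lat τ → z - β ∉ lat τ → ℘ (z - α) - ℘ (z - β) = 0 →
      deriv (fun w => ℘ (w - α) - ℘ (w - β)) z ≠ 0) ∧
    -- double poles with leading coefficient `1` at `α` and `β`:
    Filter.Tendsto (fun z => (z - α) ^ 2 * (℘ (z - α) - ℘ (z - β)))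
      (nhdsWithin α {α}ᶜ) (nhds 1) ∧
    Filter.Tendsto (fun z => (z - β) ^ 2 * (℘ (z - α) - ℘ (z - β)))
      (nhdsWithin β {β}ᶜ) (nhds (-1)) ∧
    -- the function has degree `4`:
    Set.ncard {x : ℂ ⧸ lat τ |
        x + x = QuotientAddGroup.mk (α + β)} = 4 ∧
    -- the zero set is a coset of `E[2]`:
    ∃ x₀ : ℂ ⧸ lat τ,
      {x : ℂ ⧸ lat τ | x + x = QuotientAddGroup.mk (α + β)} =
        (fun t => x₀ + t) '' {t : ℂ ⧸ lat τ | t + t = 0} := by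
  set L := periodPair τ hτ
  have hαβ' : α - β ∉ lat τ := fun h => hαβ (QuotientAddGroup.eq_iff_sub_mem.mpr h)
  have hβα : β - α ∉ lat τ := fun h => hαβ' (by simpa using neg_mem h)
  have hzeros (z : ℂ) (hzα : z - α ∉ lat τ) (hzβ : z - β ∉ lat τ) :
      ℘ (z - α) - ℘ (z - β) = 0 ↔
        (QuotientAddGroup.mk (z + z) : ℂ ⧸ lat τ) = QuotientAddGroup.mk (α + β) := by
    rw [h℘.eqOn_weierstrassP hτ hzα, h℘.eqOn_weierstrassP hτ hzβ,
      QuotientAddGroup.eq_iff_sub_mem, mem_lat_iff hτ]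
    rw [mem_lat_iff hτ] at hβα hzα hzβ
    exact L.weierstrassP_sub_sub_eq_zero_iff hβα hzα hzβ
  have hx₀ : (QuotientAddGroup.mk (α + β) : ℂ ⧸ lat τ) =
      QuotientAddGroup.mk ((α + β) / 2) + QuotientAddGroup.mk ((α + β) / 2) := by
    rw [← QuotientAddGroup.mk_add, add_halves]
  refine ⟨hzeros, fun z hzα hzβ h0 => ?_, h℘.tendsto_sq_mul_sub α hαβ', ?_,
    hx₀ ▸ ncard_setOf_add_self_eq hτ _, ⟨_, hx₀ ▸ setOf_add_self_eq_image_add _⟩⟩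
  · have hz := QuotientAddGroup.eq_iff_sub_mem.mp ((hzeros z hzα hzβ).mp h0)
    have hfun : (fun w => ℘ (w - α) - ℘ (w - β)) =ᶠ[𝓝 z]
        fun w => ℘[L] (w - α) - ℘[L] (w - β) :=
      ((h℘.eventuallyEq_weierstrassP hτ hzα).comp_tendsto ((continuous_sub_right α).tendsto z)).sub
        ((h℘.eventuallyEq_weierstrassP hτ hzβ).comp_tendsto ((continuous_sub_right β).tendsto z))
    rw [hfun.deriv_eq]
    rw [mem_lat_iff hτ] at hαβ' hzα hzβ hz
    exact L.deriv_weierstrassP_sub_sub_ne_zero hαβ' hzα hzβ hz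
  · refine (h℘.tendsto_sq_mul_sub β hβα).neg.congr fun z => ?_
    ring
end

section
/- Let E be an elliptic curve over an algebraically closed field of characteristic 0 with function field K. Let β : Λ²K^× → ℤ[E]⁻ be the map sending f ∧ g to ∑_{i,j} nᵢmⱼ[xᵢ - yⱼ], where div(f) = ∑ nᵢ[xᵢ] and div(g) = ∑ mⱼ[yⱼ], and ℤ[E]⁻ is ℤ[E] modulo the elements [ξ]+[-ξ]. Then β is well defined (independent of the representation of an element of Λ²K^× and compatible with bilinearity and antisymmetry). -/
open Finsupp

/-- An abstract interface for divisor theory on an elliptic curve `E` (identified with its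
group of points) over an algebraically closed field `k` of characteristic `0`, with function
field `K`.  The field `div` assigns to every nonzero rational function its divisor, as a
finitely supported `ℤ`-valued function on `E`; the axioms record multiplicativity, that
divisors of constants vanish (and conversely), that the total degree of a divisor of a
function is `0`, and Abel's theorem: a degree-`0` divisor is principal iff its weighted sum
of points vanishes in the group `E`. -/
structure CurveSetup (k E : Type*) [Field k] [IsAlgClosed k] [CharZero k]
    [AddCommGroup E] where
  /-- the function field of the elliptic curve -/
  K : Type*
  [fldK : Field K]
  [alg : Algebra k K]
  /-- the divisor of a rational function (junk value `0` at `f = 0`) -/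
  div : K → (E →₀ ℤ)
  div_zero' : div 0 = 0
  div_mul : ∀ {f g : K}, f ≠ 0 → g ≠ 0 → div (f * g) = div f + div g
  div_algebraMap : ∀ c : k, div (algebraMap k K c) = 0
  div_eq_zero : ∀ {f : K}, f ≠ 0 → div f = 0 → ∃ c : k, f = algebraMap k K c
  degree_sum : ∀ {f : K}, f ≠ 0 → (div f).sum (fun _ n => n) = 0
  abel_sum : ∀ {f : K}, f ≠ 0 → (div f).sum (fun x n => n • x) = 0
  abel_exists : ∀ D : E →₀ ℤ, D.sum (fun _ n => n) = 0 → D.sum (fun x n => n • x) = 0 →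
    ∃ f : K, f ≠ 0 ∧ div f = D

attribute [instance] CurveSetup.fldK CurveSetup.alg

variable {k E : Type*} [Field k] [IsAlgClosed k] [CharZero k] [AddCommGroup E]

/-- The degree of a rational function: the number of its zeros counted with
multiplicity. -/
def CurveSetup.deg (S : CurveSetup k E) (f : S.K) : ℤ :=
  (S.div f).sum fun _ n => max n 0

/-- `ℤ[E]⁻`: the free abelian group on the points of `E` modulo the subgroup generated by
the elements `[ξ] + [-ξ]`. -/
abbrev ZEminus (E : Type*) [AddCommGroup E] : Type _ :=
  FreeAbelianGroup E ⧸
    AddSubgroup.closure { r | ∃ ξ : E, r = FreeAbelianGroup.of ξ + FreeAbelianGroup.of (-ξ) }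

/-- The wedge `f ∧ g ∈ Λ² K^×` of two units, as an element of the degree-two part
`⋀[ℤ]² (K^×)` of the exterior algebra of `K^×` written additively. -/
noncomputable def wedge2 {K : Type*} [Field K] (f g : Kˣ) : ⋀[ℤ]^2 (Additive Kˣ) :=
  ⟨ExteriorAlgebra.ιMulti ℤ 2 ![Additive.ofMul f, Additive.ofMul g],
    ExteriorAlgebra.ιMulti_range ℤ 2 ⟨![Additive.ofMul f, Additive.ofMul g], rfl⟩⟩

/-!
The pairing `T(D, D') = ∑ D(x) D'(y) [x - y]` of divisors is biadditive, so `β` is induced by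
the bilinear form `(f, g) ↦ T(div f, div g)` on `K^×` once this form vanishes on the diagonal.
In `ℤ[E]⁻` we have `[-ξ] = -[ξ]`, so `T` is antisymmetric and `2 [0] = 0`; hence
`T(D, D) = ∑ D(x)² [0] = deg(D) [0]`, which vanishes for principal divisors.
-/

def LinearMap.toAlternatingMapFinTwo {R M N : Type*} [CommSemiring R] [AddCommMonoid M]
    [AddCommMonoid N] [Module R M] [Module R N] (B : M →ₗ[R] M →ₗ[R] N) (hB : ∀ x, B x x = 0) :
    M [⋀^Fin 2]→ₗ[R] N where
  toFun v := B (v 0) (v 1)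
  map_update_add' v i x y := by fin_cases i <;> simp
  map_update_smul' v i c x := by fin_cases i <;> simp
  map_eq_zero_of_eq' v i j hv hij := by
    fin_cases i <;> fin_cases j <;> simp_all

lemma wedge2_eq_ιMulti {K : Type*} [Field K] (f g : Kˣ) :
    wedge2 f g = exteriorPower.ιMulti ℤ 2 ![Additive.ofMul f, Additive.ofMul g] :=
  rfl

namespace ZEminus

variable {E : Type*} [AddCommGroup E]

noncomputable def of (ξ : E) : ZEminus E :=
  QuotientAddGroup.mk' _ (FreeAbelianGroup.of ξ)

lemma of_add_of_neg (ξ : E) : of ξ + of (-ξ) = 0 :=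
  (QuotientAddGroup.eq_zero_iff _).mpr (AddSubgroup.subset_closure ⟨ξ, rfl⟩)

lemma of_neg (ξ : E) : of (-ξ) = -of ξ :=
  eq_neg_of_add_eq_zero_right (of_add_of_neg ξ)

lemma mul_self_zsmul_of_zero (n : ℤ) : (n * n) • of (0 : E) = n • of 0 := by
  have h2 : (2 : ℤ) • of (0 : E) = 0 := by simpa [two_zsmul] using of_add_of_neg (0 : E)
  obtain ⟨r, hr⟩ := Int.even_mul_pred_self n
  rw [show n * n = n + 2 * r by linarith, add_smul, mul_comm, mul_smul, h2, smul_zero, add_zero]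

noncomputable def diffPairing : (E →₀ ℤ) →ₗ[ℤ] (E →₀ ℤ) →ₗ[ℤ] ZEminus E :=
  Finsupp.linearCombination ℤ fun x => Finsupp.linearCombination ℤ fun y => of (x - y)

lemma diffPairing_apply (D D' : E →₀ ℤ) :
    diffPairing D D' = D.sum fun x n => D'.sum fun y m => (n * m) • of (x - y) := by
  simp only [diffPairing, Finsupp.linearCombination_apply, LinearMap.finsupp_sum_apply,
    LinearMap.smul_apply, Finsupp.smul_sum, mul_smul]

lemma diffPairing_single (x y : E) (n m : ℤ) :
    diffPairing (Finsupp.single x n) (Finsupp.single y m) = (n * m) • of (x - y) := by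
  simp [diffPairing, mul_smul, smul_comm n m]

lemma diffPairing_flip : (diffPairing (E := E)).flip = -diffPairing := by
  ext x y
  simp [diffPairing, ← of_neg]

lemma diffPairing_self (D : E →₀ ℤ) : diffPairing D D = (D.sum fun _ n => n) • of 0 := by
  induction D using Finsupp.induction_linear with
  | zero => simp
  | add D₁ D₂ h₁ h₂ =>
    have hcross : diffPairing D₂ D₁ = -diffPairing D₁ D₂ := by
      rw [← LinearMap.flip_apply, diffPairing_flip]; rfl
    rw [Finsupp.sum_add_index' (fun _ => rfl) (fun _ _ _ => rfl), add_smul, map_add, map_add,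
      LinearMap.add_apply, LinearMap.add_apply, h₁, h₂, hcross]
    abel
  | single x n =>
    rw [diffPairing_single, sub_self, mul_self_zsmul_of_zero, Finsupp.sum_single_index rfl]

end ZEminus

namespace CurveSetup

variable (S : CurveSetup k E)

noncomputable def divHom : Additive S.Kˣ →+ (E →₀ ℤ) where
  toFun u := S.div (u.toMul : S.K)
  map_zero' := by simpa using S.div_algebraMap 1
  map_add' u v := S.div_mul u.toMul.ne_zero v.toMul.ne_zero

noncomputable def betaPairing : Additive S.Kˣ →ₗ[ℤ] Additive S.Kˣ →ₗ[ℤ] ZEminus E :=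
  (ZEminus.diffPairing ∘ₗ S.divHom.toIntLinearMap).compl₂ S.divHom.toIntLinearMap

lemma betaPairing_apply (f g : S.Kˣ) :
    S.betaPairing (.ofMul f) (.ofMul g) = ZEminus.diffPairing (S.div f) (S.div g) :=
  rfl

lemma betaPairing_self (u : Additive S.Kˣ) : S.betaPairing u u = 0 := by
  simp [betaPairing, ZEminus.diffPairing_self, divHom, S.degree_sum u.toMul.ne_zero]

end CurveSetup

/-- the map `β : Λ² K^× → ℤ[E]⁻`, `f ∧ g ↦ ∑_{i,j} nᵢmⱼ[xᵢ - yⱼ]` (where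
`div f = ∑ nᵢ[xᵢ]`, `div g = ∑ mⱼ[yⱼ]`) is well defined: there is a `ℤ`-linear map on
the exterior square taking each wedge `f ∧ g` to the indicated element. -/
theorem beta_well_defined (S : CurveSetup k E) :
    ∃ B : (⋀[ℤ]^2 (Additive (S.K)ˣ)) →ₗ[ℤ] ZEminus E,
      ∀ f g : (S.K)ˣ,
        B (wedge2 f g) =
          QuotientAddGroup.mk' _
            ((S.div (f : S.K)).sum fun x n =>
              (S.div (g : S.K)).sum fun y m => (n * m) • FreeAbelianGroup.of (x - y)) := by
  refine ⟨exteriorPower.alternatingMapLinearEquiv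
    (S.betaPairing.toAlternatingMapFinTwo S.betaPairing_self), fun f g => ?_⟩
  rw [wedge2_eq_ιMulti, exteriorPower.alternatingMapLinearEquiv_apply_ιMulti]
  simp [LinearMap.toAlternatingMapFinTwo, CurveSetup.betaPairing_apply,
    ZEminus.diffPairing_apply, map_finsuppSum, ZEminus.of]
end

section
/- Let E = ℂ/⟨1,τ⟩ and let f be a rational function on E of degree 2. Then the elliptic Bloch relation for f, namely ∑_{i,j=1}^{2} (D_τ(αᵢ - βⱼ) + D_τ(βᵢ - γⱼ) + D_τ(γᵢ - αⱼ)) = 0 where div(f) = ∑ᵢ([αᵢ]-[γᵢ]) and div(1-f) = ∑ᵢ([βᵢ]-[γᵢ]), follows from the antisymmetry relation D_τ(ξ) = -D_τ(-ξ) alone; i.e., the element ∑_{i,j}([αᵢ-βⱼ]+[βᵢ-γⱼ]+[γᵢ-αⱼ]) vanishes in ℤ[E]⁻. -/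
open Finsupp

variable {k E : Type*} [Field k] [IsAlgClosed k] [CharZero k] [AddCommGroup E]

/-!
By Abel's theorem the divisors of `f` and `1 - f` give `α₁ + α₂ = γ₁ + γ₂ = β₁ + β₂` in `E`.
Whenever `a₁ + a₂ = b₁ + b₂`, the four differences `aᵢ - bⱼ` pair off into opposites,
`a₂ - b₂ = -(a₁ - b₁)` and `a₂ - b₁ = -(a₁ - b₂)`, so `∑ᵢⱼ [aᵢ - bⱼ]` is a sum of two
antisymmetry relations. The Bloch element is the sum of three such blocks.
-/

theorem sum_zsmul_single_add_single_sub_single_sub_single (a b c d : E) :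
    (single a (1 : ℤ) + single b 1 - single c 1 - single d 1).sum (fun x n => n • x) =
      a + b - c - d := by
  have hsub (x : E) (m n : ℤ) : (m - n) • x = m • x - n • x := sub_smul m n x
  rw [sum_sub_index hsub, sum_sub_index hsub, sum_add_index' zero_zsmul add_zsmul,
    sum_single_index (zero_zsmul a), sum_single_index (zero_zsmul b),
    sum_single_index (zero_zsmul c), sum_single_index (zero_zsmul d),
    one_zsmul, one_zsmul, one_zsmul, one_zsmul]

namespace CurveSetup

theorem add_eq_add_of_div_eq (S : CurveSetup k E) {g : S.K} (hg : g ≠ 0) {a b c d : E}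
    (hdiv : S.div g = single a 1 + single b 1 - single c 1 - single d 1) :
    a + b = c + d := by
  have h := S.abel_sum hg
  rwa [hdiv, sum_zsmul_single_add_single_sub_single_sub_single, sub_sub, sub_eq_zero] at h

end CurveSetup

namespace FreeAbelianGroup

variable {A : Type*} [AddCommGroup A]

variable (A) in
/-- The kernel of `ℤ[A] → ℤ[A]⁻`. -/
def antisymmSubgroup : AddSubgroup (FreeAbelianGroup A) :=
  AddSubgroup.closure {r | ∃ ξ, r = of ξ + of (-ξ)}

theorem of_add_of_mem_antisymmSubgroup {x y : A} (h : x + y = 0) :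
    of x + of y ∈ antisymmSubgroup A :=
  AddSubgroup.subset_closure ⟨x, by rw [eq_neg_of_add_eq_zero_right h]⟩

theorem sum_of_sub_mem_antisymmSubgroup {a₁ a₂ b₁ b₂ : A} (h : a₁ + a₂ = b₁ + b₂) :
    of (a₁ - b₁) + of (a₁ - b₂) + of (a₂ - b₁) + of (a₂ - b₂) ∈ antisymmSubgroup A := by
  have h₁ : (a₁ - b₁) + (a₂ - b₂) = 0 := by rw [sub_add_sub_comm, h, sub_self]
  have h₂ : (a₁ - b₂) + (a₂ - b₁) = 0 := by rw [sub_add_sub_comm, h, add_comm b₂, sub_self]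
  have hsum := add_mem (of_add_of_mem_antisymmSubgroup h₁) (of_add_of_mem_antisymmSubgroup h₂)
  convert hsum using 1
  abel

end FreeAbelianGroup

open FreeAbelianGroup in
theorem degree_two_bloch_relation_from_antisymmetry_general (τ : ℂ)
    (S : CurveSetup ℂ (ℂ ⧸ lat τ)) (f : S.K) (hf0 : f ≠ 0) (hf1 : f ≠ 1)
    (α₁ α₂ β₁ β₂ γ₁ γ₂ : ℂ ⧸ lat τ)
    (hdivf : S.div f = single α₁ 1 + single α₂ 1 - single γ₁ 1 - single γ₂ 1)
    (hdiv1f : S.div (1 - f) = single β₁ 1 + single β₂ 1 - single γ₁ 1 - single γ₂ 1) :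
    (FreeAbelianGroup.of (α₁ - β₁) + FreeAbelianGroup.of (α₁ - β₂) +
     FreeAbelianGroup.of (α₂ - β₁) + FreeAbelianGroup.of (α₂ - β₂) +
     FreeAbelianGroup.of (β₁ - γ₁) + FreeAbelianGroup.of (β₁ - γ₂) +
     FreeAbelianGroup.of (β₂ - γ₁) + FreeAbelianGroup.of (β₂ - γ₂) +
     FreeAbelianGroup.of (γ₁ - α₁) + FreeAbelianGroup.of (γ₁ - α₂) +
     FreeAbelianGroup.of (γ₂ - α₁) + FreeAbelianGroup.of (γ₂ - α₂)) ∈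
      AddSubgroup.closure
        { r : FreeAbelianGroup (ℂ ⧸ lat τ) |
            ∃ ξ, r = FreeAbelianGroup.of ξ + FreeAbelianGroup.of (-ξ) } := by
  have hα : α₁ + α₂ = γ₁ + γ₂ := S.add_eq_add_of_div_eq hf0 hdivf
  have hβ : β₁ + β₂ = γ₁ + γ₂ := S.add_eq_add_of_div_eq (sub_ne_zero.mpr hf1.symm) hdiv1f
  have hsum := add_mem (add_mem (sum_of_sub_mem_antisymmSubgroup (hα.trans hβ.symm))
    (sum_of_sub_mem_antisymmSubgroup hβ)) (sum_of_sub_mem_antisymmSubgroup hα.symm)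
  show _ ∈ antisymmSubgroup _
  convert hsum using 1
  abel

/-- let `E = ℂ/⟨1,τ⟩` and let `f` be a rational function of degree `2` on
`E`, with `div f = [α₁]+[α₂]-[γ₁]-[γ₂]` and `div (1-f) = [β₁]+[β₂]-[γ₁]-[γ₂]`.  Then the
element `∑_{i,j=1}^{2} ([αᵢ-βⱼ]+[βᵢ-γⱼ]+[γᵢ-αⱼ])` vanishes in `ℤ[E]⁻`, i.e. the elliptic
Bloch relation for `f` follows from the antisymmetry relation alone. -/
theorem degree_two_bloch_relation_from_antisymmetry (τ : ℂ) (hτ : 0 < τ.im)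
    (S : CurveSetup ℂ (ℂ ⧸ lat τ)) (f : S.K) (hf0 : f ≠ 0) (hf1 : f ≠ 1)
    (hdeg : S.deg f = 2)
    (α₁ α₂ β₁ β₂ γ₁ γ₂ : ℂ ⧸ lat τ)
    (hdivf : S.div f = single α₁ 1 + single α₂ 1 - single γ₁ 1 - single γ₂ 1)
    (hdiv1f : S.div (1 - f) = single β₁ 1 + single β₂ 1 - single γ₁ 1 - single γ₂ 1) :
    (FreeAbelianGroup.of (α₁ - β₁) + FreeAbelianGroup.of (α₁ - β₂) +
     FreeAbelianGroup.of (α₂ - β₁) + FreeAbelianGroup.of (α₂ - β₂) +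
     FreeAbelianGroup.of (β₁ - γ₁) + FreeAbelianGroup.of (β₁ - γ₂) +
     FreeAbelianGroup.of (β₂ - γ₁) + FreeAbelianGroup.of (β₂ - γ₂) +
     FreeAbelianGroup.of (γ₁ - α₁) + FreeAbelianGroup.of (γ₁ - α₂) +
     FreeAbelianGroup.of (γ₂ - α₁) + FreeAbelianGroup.of (γ₂ - α₂)) ∈
      AddSubgroup.closure
        { r : FreeAbelianGroup (ℂ ⧸ lat τ) |
            ∃ ξ, r = FreeAbelianGroup.of ξ + FreeAbelianGroup.of (-ξ) } :=
  degree_two_bloch_relation_from_antisymmetry_general τ S f hf0 hf1 α₁ α₂ β₁ β₂ γ₁ γ₂ hdivf hdiv1f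
end
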